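/- Suppose S_1, S_2 are polynomial solutions of the Lamé equation of degree k with Van Vleck parameters ν_1 < ν_2, and let x_1 be the smallest zero of S_1 in (α_1, α_2). Then S_2 has a zero in the open interval (α_1, x_1). -/

import Mathlib

/-!
Sturm comparison through a weighted Wronskian. With `A = ∏ (x - αⱼ)` and the integrating factor
`J = ∏ |x - αⱼ|^ρⱼ`, the equation reads `(J S')' = J μ (x - ν) S / A`, so
`W = J (S₁' S₂ - S₁ S₂')` has `W' = J μ (ν₂ - ν₁) S₁ S₂ / A`. On `(α₁, x₁)` we have `A > 0`; if `S₂`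
had no zero there, then after replacing `S₂` by `-S₂` we would have `S₁ S₂ > 0`, so `W` would
increase strictly from `W(α₁) = 0` (as `ρ₁ > 0`) to `W(x₁) = J S₁'(x₁) S₂(x₁)`. But `S₁ S₂` vanishes
at `x₁` and is positive to its left, so `S₁'(x₁) S₂(x₁) ≤ 0`, a contradiction.
-/

open Polynomial Set Filter

theorem forall_pos_or_forall_neg_of_ne_zero {α : Type*} [TopologicalSpace α] {s : Set α}
    {f : α → ℝ} (hs : IsPreconnected s) (hf : ContinuousOn f s) (h0 : ∀ t ∈ s, f t ≠ 0) :
    (∀ t ∈ s, 0 < f t) ∨ ∀ t ∈ s, f t < 0 := by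
  by_contra! ⟨⟨t, ht, hft⟩, u, hu, hfu⟩
  obtain ⟨x, hx, hx0⟩ := hs.intermediate_value ht hu hf ⟨hft, hfu⟩
  exact h0 x hx hx0

theorem hasDerivAt_abs_sub_rpow {a r x : ℝ} (hx : x ≠ a) :
    HasDerivAt (fun y => |y - a| ^ r) (r / (x - a) * |x - a| ^ r) x := by
  have hxa : x - a ≠ 0 := sub_ne_zero.2 hx
  have habs : HasDerivAt (fun y => |y - a|) (SignType.sign (x - a) : ℝ) x := by
    simpa [Function.comp_def] using (hasDerivAt_abs hxa).comp x ((hasDerivAt_id' x).sub_const a)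
  convert habs.rpow_const (p := r) (Or.inl (abs_ne_zero.2 hxa)) using 1
  rw [Real.rpow_sub_one (abs_ne_zero.2 hxa)]
  rcases hxa.lt_or_gt with h | h
  · simp only [abs_of_neg h, neg_sub, sign_neg h, SignType.coe_neg, SignType.coe_one, neg_mul,
      one_mul]
    field_simp
    ring
  · simp only [abs_of_pos h, sign_pos h, SignType.coe_one, one_mul]
    field_simp

theorem HasDerivAt.nonpos_of_le_left {f : ℝ → ℝ} {f' a b : ℝ} (hf : HasDerivAt f f' b)
    (hab : a < b) (hle : ∀ t ∈ Ioo a b, f b ≤ f t) : f' ≤ 0 := by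
  have hmin : IsLocalMinOn f (Ioc a b) b :=
    Filter.eventually_of_mem self_mem_nhdsWithin fun t ht =>
      (eq_or_lt_of_le ht.2).elim (fun h => h ▸ le_rfl) fun h => hle t ⟨ht.1, h⟩
  have hcone : (a - b) / 2 ∈ posTangentConeAt (Ioc a b) b := by
    apply mem_posTangentConeAt_of_segment_subset
    rw [segment_symm, segment_eq_Icc (by linarith)]
    exact Icc_subset_Ioc (by linarith) le_rfl
  have := hmin.hasFDerivWithinAt_nonneg hf.hasDerivWithinAt.hasFDerivWithinAt hcone
  simp only [ContinuousLinearMap.toSpanSingleton_apply, smul_eq_mul] at this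
  nlinarith

section Lame

variable {a1 a2 a3 r1 r2 r3 μ : ℝ}

noncomputable def lameWeight (a1 a2 a3 r1 r2 r3 x : ℝ) : ℝ :=
  |x - a1| ^ r1 * |x - a2| ^ r2 * |x - a3| ^ r3

theorem lameWeight_pos {x : ℝ} (h1 : x ≠ a1) (h2 : x ≠ a2) (h3 : x ≠ a3) :
    0 < lameWeight a1 a2 a3 r1 r2 r3 x := by
  unfold lameWeight
  have := sub_ne_zero.2 h1
  have := sub_ne_zero.2 h2
  have := sub_ne_zero.2 h3
  positivity

theorem lameWeight_left (hr1 : r1 ≠ 0) : lameWeight a1 a2 a3 r1 r2 r3 a1 = 0 := by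
  simp [lameWeight, Real.zero_rpow hr1]

theorem continuousAt_lameWeight {x : ℝ} (h1 : x ≠ a1 ∨ 0 ≤ r1) (h2 : x ≠ a2 ∨ 0 ≤ r2)
    (h3 : x ≠ a3 ∨ 0 ≤ r3) : ContinuousAt (lameWeight a1 a2 a3 r1 r2 r3) x := by
  have factor {a r : ℝ} (h : x ≠ a ∨ 0 ≤ r) : ContinuousAt (fun y => |y - a| ^ r) x :=
    (continuous_abs.comp (continuous_sub_right a)).continuousAt.rpow_const
      (h.imp_left fun hx => abs_ne_zero.2 (sub_ne_zero.2 hx))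
  exact ((factor h1).mul (factor h2)).mul (factor h3)

theorem hasDerivAt_lameWeight {x : ℝ} (h1 : x ≠ a1) (h2 : x ≠ a2) (h3 : x ≠ a3) :
    HasDerivAt (lameWeight a1 a2 a3 r1 r2 r3)
      (lameWeight a1 a2 a3 r1 r2 r3 x * (r1 / (x - a1) + r2 / (x - a2) + r3 / (x - a3))) x := by
  refine (((hasDerivAt_abs_sub_rpow h1).mul (hasDerivAt_abs_sub_rpow h2)).mul
    (hasDerivAt_abs_sub_rpow h3)).congr_deriv ?_
  simp only [lameWeight, Pi.mul_apply]
  ring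

def IsLameSolution (a1 a2 a3 r1 r2 r3 μ ν : ℝ) (S : ℝ[X]) : Prop :=
  ((X - C a1) * (X - C a2) * (X - C a3)) * S.derivative.derivative
    + (C r1 * ((X - C a2) * (X - C a3)) + C r2 * ((X - C a1) * (X - C a3))
      + C r3 * ((X - C a1) * (X - C a2))) * S.derivative
    = C μ * (X - C ν) * S

namespace IsLameSolution

variable {ν ν1 ν2 : ℝ} {S S1 S2 : ℝ[X]}

theorem neg (hS : IsLameSolution a1 a2 a3 r1 r2 r3 μ ν S) :
    IsLameSolution a1 a2 a3 r1 r2 r3 μ ν (-S) := by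
  unfold IsLameSolution at *
  simp only [derivative_neg]
  linear_combination -hS

theorem eval_eq (hS : IsLameSolution a1 a2 a3 r1 r2 r3 μ ν S) (x : ℝ) :
    (x - a1) * (x - a2) * (x - a3) * S.derivative.derivative.eval x
      + (r1 * ((x - a2) * (x - a3)) + r2 * ((x - a1) * (x - a3)) + r3 * ((x - a1) * (x - a2)))
        * S.derivative.eval x
      = μ * (x - ν) * S.eval x := by
  simpa using congrArg (eval x) hS

theorem hasDerivAt_lameWeight_mul_derivative (hS : IsLameSolution a1 a2 a3 r1 r2 r3 μ ν S)
    {x : ℝ} (h1 : x ≠ a1) (h2 : x ≠ a2) (h3 : x ≠ a3) :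
    HasDerivAt (fun y => lameWeight a1 a2 a3 r1 r2 r3 y * S.derivative.eval y)
      (lameWeight a1 a2 a3 r1 r2 r3 x * (μ * (x - ν) * S.eval x)
        / ((x - a1) * (x - a2) * (x - a3))) x := by
  refine ((hasDerivAt_lameWeight h1 h2 h3).mul (S.derivative.hasDerivAt x)).congr_deriv ?_
  have := sub_ne_zero.2 h1
  have := sub_ne_zero.2 h2
  have := sub_ne_zero.2 h3
  rw [← hS.eval_eq x]
  field_simp
  ring

theorem hasDerivAt_lameWeight_mul_wronskian (hS1 : IsLameSolution a1 a2 a3 r1 r2 r3 μ ν1 S1)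
    (hS2 : IsLameSolution a1 a2 a3 r1 r2 r3 μ ν2 S2)
    {x : ℝ} (h1 : x ≠ a1) (h2 : x ≠ a2) (h3 : x ≠ a3) :
    HasDerivAt (fun y => lameWeight a1 a2 a3 r1 r2 r3 y *
        (S1.derivative.eval y * S2.eval y - S1.eval y * S2.derivative.eval y))
      (lameWeight a1 a2 a3 r1 r2 r3 x * (μ * (ν2 - ν1) * (S1.eval x * S2.eval x))
        / ((x - a1) * (x - a2) * (x - a3))) x := by
  refine (((hS1.hasDerivAt_lameWeight_mul_derivative h1 h2 h3).mul (S2.hasDerivAt x)).sub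
    ((S1.hasDerivAt x).mul (hS2.hasDerivAt_lameWeight_mul_derivative h1 h2 h3))).congr_deriv ?_
    |>.congr_of_eventuallyEq <| Eventually.of_forall fun y => by
      simp only [Pi.mul_apply, Pi.sub_apply]
      ring
  ring

theorem exists_eval_mul_eval_nonpos (hS1 : IsLameSolution a1 a2 a3 r1 r2 r3 μ ν1 S1)
    (hS2 : IsLameSolution a1 a2 a3 r1 r2 r3 μ ν2 S2) (hμ : 0 < μ) (hν : ν1 < ν2) (hr1 : 0 < r1)
    {x1 : ℝ} (h1 : a1 < x1) (h2 : x1 < a2) (h23 : a2 < a3) (hz : S1.eval x1 = 0) :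
    ∃ t ∈ Ioo a1 x1, S1.eval t * S2.eval t ≤ 0 := by
  by_contra! hpos
  set W := fun y => lameWeight a1 a2 a3 r1 r2 r3 y *
    (S1.derivative.eval y * S2.eval y - S1.eval y * S2.derivative.eval y)
  have hW_cont : ContinuousOn W (Icc a1 x1) := fun x hx =>
    ((continuousAt_lameWeight (Or.inr hr1.le) (Or.inl (by linarith [hx.2]))
      (Or.inl (by linarith [hx.2]))).mul (by fun_prop)).continuousWithinAt
  have hW_mono : StrictMonoOn W (Icc a1 x1) := by
    refine strictMonoOn_of_deriv_pos (convex_Icc a1 x1) hW_cont fun x hx => ?_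
    rw [interior_Icc] at hx
    obtain ⟨hx1, hx2⟩ : a1 < x ∧ x < a2 := ⟨hx.1, hx.2.trans h2⟩
    rw [(hS1.hasDerivAt_lameWeight_mul_wronskian hS2 hx1.ne' hx2.ne (by linarith)).deriv]
    have hA : 0 < (x - a1) * (x - a2) * (x - a3) :=
      mul_pos_of_neg_of_neg (mul_neg_of_pos_of_neg (by linarith) (by linarith)) (by linarith)
    have hw := lameWeight_pos (r1 := r1) (r2 := r2) (r3 := r3) hx1.ne' hx2.ne
      (show x ≠ a3 by linarith)
    have := hpos x hx
    have := sub_pos.2 hν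
    positivity
  have hW_left : W a1 = 0 := by simp [W, lameWeight_left hr1.ne']
  have hslope : S1.derivative.eval x1 * S2.eval x1 ≤ 0 := by
    have hprod := ((S1.hasDerivAt x1).mul (S2.hasDerivAt x1)).nonpos_of_le_left h1
      fun t ht => by simpa only [Pi.mul_apply, hz, zero_mul] using (hpos t ht).le
    rwa [hz, zero_mul, add_zero] at hprod
  have hW_right : W x1 ≤ 0 := by
    simp only [W, hz, zero_mul, sub_zero]
    exact mul_nonpos_of_nonneg_of_nonpos
      (lameWeight_pos (by linarith) h2.ne (by linarith)).le hslope
  linarith [hW_mono (left_mem_Icc.2 h1.le) (right_mem_Icc.2 h1.le) h1]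

end IsLameSolution

end Lame

theorem stmt_4_general (a1 a2 a3 r1 r2 r3 μ ν1 ν2 : ℝ)
    (h23 : a2 < a3)
    (hr1 : 0 < r1) (hr2 : 0 < r2) (hr3 : 0 < r3)
    (k : ℕ) (hk : 1 ≤ k) (hμ : μ = (k : ℝ) * ((k : ℝ) - 1 + r1 + r2 + r3))
    (S1 S2 : Polynomial ℝ)
    (hode1 : ((X - C a1) * (X - C a2) * (X - C a3)) * S1.derivative.derivative
        + (C r1 * ((X - C a2) * (X - C a3)) + C r2 * ((X - C a1) * (X - C a3))
            + C r3 * ((X - C a1) * (X - C a2))) * S1.derivative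
        = C μ * (X - C ν1) * S1)
    (hode2 : ((X - C a1) * (X - C a2) * (X - C a3)) * S2.derivative.derivative
        + (C r1 * ((X - C a2) * (X - C a3)) + C r2 * ((X - C a1) * (X - C a3))
            + C r3 * ((X - C a1) * (X - C a2))) * S2.derivative
        = C μ * (X - C ν2) * S2)
    (hν : ν1 < ν2)
    (x1 : ℝ) (hx1 : x1 ∈ Ioo a1 a2) (hz1 : S1.eval x1 = 0)
    (hsmallest : ∀ t ∈ Ioo a1 x1, S1.eval t ≠ 0) :
    ∃ y ∈ Ioo a1 x1, S2.eval y = 0 := by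
  by_contra! hS2
  have hμpos : 0 < μ := by
    have hk1 : (1 : ℝ) ≤ k := by exact_mod_cast hk
    rw [hμ]
    nlinarith
  have key := fun {S : ℝ[X]} (hS : IsLameSolution a1 a2 a3 r1 r2 r3 μ ν2 S) =>
    IsLameSolution.exists_eval_mul_eval_nonpos hode1 hS hμpos hν hr1 hx1.1 hx1.2 h23 hz1
  rcases forall_pos_or_forall_neg_of_ne_zero isPreconnected_Ioo
      (S1.continuous.mul S2.continuous).continuousOn
      (fun t ht => mul_ne_zero (hsmallest t ht) (hS2 t ht)) with hpos | hneg
  · obtain ⟨t, ht, hle⟩ := key hode2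
    exact (hpos t ht).not_ge hle
  · obtain ⟨t, ht, hle⟩ := key (IsLameSolution.neg hode2)
    rw [eval_neg, mul_neg, neg_nonpos] at hle
    exact (hneg t ht).not_ge hle

/-- If `x₁` is the smallest zero of `S₁` in `(α₁, α₂)`, then `S₂` has a zero
in `(α₁, x₁)`, for Stieltjes polynomials of equal degree with `ν₁ < ν₂`. -/
theorem stmt_4 (a1 a2 a3 r1 r2 r3 μ ν1 ν2 : ℝ)
    (h12 : a1 < a2) (h23 : a2 < a3)
    (hr1 : 0 < r1) (hr2 : 0 < r2) (hr3 : 0 < r3)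
    (k : ℕ) (hk : 1 ≤ k) (hμ : μ = (k : ℝ) * ((k : ℝ) - 1 + r1 + r2 + r3))
    (S1 S2 : Polynomial ℝ)
    (hd1 : S1.natDegree = k) (hd2 : S2.natDegree = k)
    (hode1 : ((X - C a1) * (X - C a2) * (X - C a3)) * S1.derivative.derivative
        + (C r1 * ((X - C a2) * (X - C a3)) + C r2 * ((X - C a1) * (X - C a3))
            + C r3 * ((X - C a1) * (X - C a2))) * S1.derivative
        = C μ * (X - C ν1) * S1)
    (hode2 : ((X - C a1) * (X - C a2) * (X - C a3)) * S2.derivative.derivative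
        + (C r1 * ((X - C a2) * (X - C a3)) + C r2 * ((X - C a1) * (X - C a3))
            + C r3 * ((X - C a1) * (X - C a2))) * S2.derivative
        = C μ * (X - C ν2) * S2)
    (hsimple1 : ∀ t : ℝ, S1.eval t = 0 → S1.derivative.eval t ≠ 0)
    (hsimple2 : ∀ t : ℝ, S2.eval t = 0 → S2.derivative.eval t ≠ 0)
    (hloc1 : ∀ t : ℝ, S1.eval t = 0 → t ∈ Ioo a1 a3)
    (hloc2 : ∀ t : ℝ, S2.eval t = 0 → t ∈ Ioo a1 a3)
    (hν : ν1 < ν2)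
    (x1 : ℝ) (hx1 : x1 ∈ Ioo a1 a2) (hz1 : S1.eval x1 = 0)
    (hsmallest : ∀ t ∈ Ioo a1 x1, S1.eval t ≠ 0) :
    ∃ y ∈ Ioo a1 x1, S2.eval y = 0 :=
  stmt_4_general a1 a2 a3 r1 r2 r3 μ ν1 ν2 h23 hr1 hr2 hr3 k hk hμ S1 S2 hode1 hode2 hν x1 hx1 hz1
    hsmallest
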